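/- Let f₀ : ℝⁿ → ℝⁿ be Lipschitz continuous with Lipschitz constant at most M and satisfy f₀(xᵢ) = yᵢ for every i = 1,…,N, and let (v, w) be feasible for the outer LP, i.e.: ∂v/∂t(t,x) + y·∇ₓv(t,x) ≤ 0 for all t ∈ [0,T], x ∈ X, y ∈ F(x); w(x) ≥ v(0,x) + 1 on X; v(T,x) ≥ 0 on X_T; w(x) ≥ 0 on X. Then the true region of attraction X₀(f₀) of the unknown system ẋ = f₀(x) satisfies X₀(f₀) ⊆ {x ∈ X : w(x) ≥ 1}. -/

import Mathlib

/-- The true region of attraction `X₀(f₀)` of the system `ẋ = f₀(x)`. -/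
def trueROA {n : ℕ} (T : ℝ) (f₀ : EuclideanSpace ℝ (Fin n) → EuclideanSpace ℝ (Fin n))
    (X XT : Set (EuclideanSpace ℝ (Fin n))) : Set (EuclideanSpace ℝ (Fin n)) :=
  {x₀ ∈ X | ∃ traj : ℝ → EuclideanSpace ℝ (Fin n),
    traj 0 = x₀ ∧ traj T ∈ XT ∧
    (∀ t ∈ Set.Icc (0 : ℝ) T, traj t ∈ X) ∧
    (∀ t ∈ Set.Icc (0 : ℝ) T, HasDerivAt traj (f₀ (traj t)) t)}

/-!
Along a trajectory `x(t)` of `ẋ = f₀(x)` the velocity `f₀(x(t))` lies in the uncertainty set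
`F(x(t))`, because `f₀` is an `M`-Lipschitz interpolant of the data. The Lie-derivative
constraint therefore makes `t ↦ v(t, x(t))` nonincreasing on `[0, T]`, so
`w(x₀) ≥ v(0, x₀) + 1 ≥ v(T, x(T)) + 1 ≥ 1`.
-/

open Set

section UncertaintySet

variable {ι E : Type*} [SeminormedAddCommGroup E]

/-- The uncertainty set `F(x)` of the data `(xd i, yd i)` for the Lipschitz bound `M`. -/
def uncertaintySet (M : ℝ) (xd yd : ι → E) (x : E) : Set E :=
  {y | ∀ i, ‖y - yd i‖ ≤ M * ‖x - xd i‖}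

theorem apply_mem_uncertaintySet {M : ℝ} {xd yd : ι → E} {f : E → E}
    (hf : ∀ a b, ‖f a - f b‖ ≤ M * ‖a - b‖) (hdata : ∀ i, f (xd i) = yd i) (x : E) :
    f x ∈ uncertaintySet M xd yd x := fun i => hdata i ▸ hf x (xd i)

end UncertaintySet

section Graph

variable {E : Type*} [NormedAddCommGroup E] [NormedSpace ℝ E]

theorem DifferentiableAt.hasDerivAt_comp_graph {v : ℝ × E → ℝ} {γ : ℝ → E} {γ' : E} {t : ℝ}
    (hv : DifferentiableAt ℝ v (t, γ t)) (hγ : HasDerivAt γ γ' t) :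
    HasDerivAt (fun s => v (s, γ s)) (fderiv ℝ v (t, γ t) (1, γ')) t :=
  hv.hasFDerivAt.comp_hasDerivAt t ((hasDerivAt_id t).prodMk hγ)

theorem antitoneOn_comp_graph_of_fderiv_nonpos {v : ℝ × E → ℝ} {γ γ' : ℝ → E} {a b : ℝ}
    (hv : Differentiable ℝ v) (hγ : ∀ t ∈ Icc a b, HasDerivAt γ (γ' t) t)
    (hdecr : ∀ t ∈ Ioo a b, fderiv ℝ v (t, γ t) (1, γ' t) ≤ 0) :
    AntitoneOn (fun t => v (t, γ t)) (Icc a b) := by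
  have hderiv : ∀ t ∈ Icc a b,
      HasDerivAt (fun s => v (s, γ s)) (fderiv ℝ v (t, γ t) (1, γ' t)) t :=
    fun t ht => (hv _).hasDerivAt_comp_graph (hγ t ht)
  refine antitoneOn_of_deriv_nonpos (convex_Icc a b)
    (fun t ht => (hderiv t ht).continuousAt.continuousWithinAt) ?_ ?_ <;>
    rw [interior_Icc] <;> intro t ht
  · exact (hderiv t (Ioo_subset_Icc_self ht)).differentiableAt.differentiableWithinAt
  · exact (hderiv t (Ioo_subset_Icc_self ht)).deriv ▸ hdecr t ht

end Graph

theorem trueROA_outer_estimate_general (n N : ℕ)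
    (M T : ℝ) (hT : 0 < T)
    (xd yd : Fin N → EuclideanSpace ℝ (Fin n))
    (X XT : Set (EuclideanSpace ℝ (Fin n)))
    (f₀ : EuclideanSpace ℝ (Fin n) → EuclideanSpace ℝ (Fin n))
    (hLip : ∀ a b : EuclideanSpace ℝ (Fin n), ‖f₀ a - f₀ b‖ ≤ M * ‖a - b‖)
    (hdata : ∀ i : Fin N, f₀ (xd i) = yd i)
    (v : ℝ × EuclideanSpace ℝ (Fin n) → ℝ) (hv : ContDiff ℝ 1 v)
    (w : EuclideanSpace ℝ (Fin n) → ℝ)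
    (hLie : ∀ t ∈ Set.Icc (0 : ℝ) T, ∀ x ∈ X, ∀ y : EuclideanSpace ℝ (Fin n),
      (∀ i : Fin N, ‖y - yd i‖ ≤ M * ‖x - xd i‖) →
      fderiv ℝ v (t, x) (1, y) ≤ 0)
    (hwv : ∀ x ∈ X, w x ≥ v (0, x) + 1)
    (hvT : ∀ x ∈ XT, v (T, x) ≥ 0) :
    trueROA T f₀ X XT ⊆ {x ∈ X | w x ≥ 1} := by
  rintro _ ⟨hx₀, γ, rfl, hγT, hγX, hγ⟩
  refine ⟨hx₀, ?_⟩
  have hanti : AntitoneOn (fun t => v (t, γ t)) (Icc 0 T) :=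
    antitoneOn_comp_graph_of_fderiv_nonpos (hv.differentiable one_ne_zero) hγ fun t ht =>
      hLie t (Ioo_subset_Icc_self ht) _ (hγX t (Ioo_subset_Icc_self ht)) _
        (apply_mem_uncertaintySet hLip hdata (γ t))
  have hvγ : v (T, γ T) ≤ v (0, γ 0) :=
    hanti (left_mem_Icc.2 hT.le) (right_mem_Icc.2 hT.le) hT.le
  linarith [hvT _ hγT, hwv _ hx₀]

/-- if `f₀` is an `M`-Lipschitz interpolant of the data and `(v,w)` is
feasible for the outer LP, then `X₀(f₀) ⊆ {x ∈ X : w(x) ≥ 1}`. -/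
theorem trueROA_outer_estimate (n N : ℕ) (hn : 0 < n) (hN : 0 < N)
    (M T : ℝ) (hM : 0 < M) (hT : 0 < T)
    (xd yd : Fin N → EuclideanSpace ℝ (Fin n))
    (X XT : Set (EuclideanSpace ℝ (Fin n)))
    (hX : IsCompact X) (hXT : IsCompact XT) (hsub : XT ⊆ X)
    (f₀ : EuclideanSpace ℝ (Fin n) → EuclideanSpace ℝ (Fin n))
    (hLip : ∀ a b : EuclideanSpace ℝ (Fin n), ‖f₀ a - f₀ b‖ ≤ M * ‖a - b‖)
    (hdata : ∀ i : Fin N, f₀ (xd i) = yd i)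
    (v : ℝ × EuclideanSpace ℝ (Fin n) → ℝ) (hv : ContDiff ℝ 1 v)
    (w : EuclideanSpace ℝ (Fin n) → ℝ) (hw : Continuous w)
    (hLie : ∀ t ∈ Set.Icc (0 : ℝ) T, ∀ x ∈ X, ∀ y : EuclideanSpace ℝ (Fin n),
      (∀ i : Fin N, ‖y - yd i‖ ≤ M * ‖x - xd i‖) →
      fderiv ℝ v (t, x) (1, y) ≤ 0)
    (hwv : ∀ x ∈ X, w x ≥ v (0, x) + 1)
    (hvT : ∀ x ∈ XT, v (T, x) ≥ 0)
    (hw0 : ∀ x ∈ X, w x ≥ 0) :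
    trueROA T f₀ X XT ⊆ {x ∈ X | w x ≥ 1} :=
  trueROA_outer_estimate_general n N M T hT xd yd X XT f₀ hLip hdata v hv w hLie hwv hvT
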